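/- arXiv:1406.2919 — 2 statements merged into one kernel-verified Lean document; each statement's English description precedes it below -/
import Mathlib

section
/- Let g : [0,a] × ℝ^N → ℝ^N be measurable in t, locally Lipschitz in y with integrable local Lipschitz bounds, and satisfy ‖g(t,y)‖ ≤ α(t)(1+‖y‖)+1 with α ∈ L¹. Let τ ∈ C¹(ℝ^N,ℝ) with 0 < τ(y) < a, τ(y + I(y)) ≤ τ(y) for a continuous I : ℝ^N → ℝ^N, and suppose there exists p' > 0 with τ'(y)·g(t,y) − 1 < −p' for a.e. t and all y in the relevant bounded set. Then the impulsive problem y'(t) = g(t,y(t)) for t ≠ τ(y(t)), y(0) = y₀, y(t⁺) = y(t) + I(y(t)) at t = τ(y(t)), has exactly one solution on [0,a], and this solution has exactly one jump. -/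
/-!
Off the jump the problem is a Carathéodory ODE. By the linear growth bound and Grönwall's
inequality every solution stays in a ball determined by its initial value, where `g` is Lipschitz
with an integrable constant `Λ`; truncating `g` outside that ball, the `n`-th iterate of the Picard
map contracts by `(∫ Λ)ⁿ / n!`, which gives existence, and Grönwall again gives uniqueness.

Along a solution, the chain rule for absolutely continuous functions turns the transversality
condition into: `τ (y t) - t` decreases at rate at least `p'`. It is positive at `0` and negative
at `a`, so it vanishes exactly once, at `t₁`; after the jump `τ (x + I x) ≤ τ x` keeps it negative,
so there is no second jump.

Uniqueness must also exclude functions satisfying the integral equations only through the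
convention that the integral of a non-integrable function is `0`: up to the supremum of the times
where the integrand is integrable such a function is the genuine solution, and beyond it it is
constant, so its integrand is integrable after all.
-/

open Set MeasureTheory Metric Filter Topology

section RadialRetraction

variable {E : Type*} [NormedAddCommGroup E] [NormedSpace ℝ E]

noncomputable def radialRetraction (R : ℝ) (x : E) : E := min 1 (R / ‖x‖) • x

lemma norm_radialRetraction {R : ℝ} (hR : 0 ≤ R) (x : E) :
    ‖radialRetraction R x‖ = min ‖x‖ R := by
  rcases (norm_nonneg x).eq_or_lt with hx | hx
  · simp [radialRetraction, ← hx, hR]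
  · rw [radialRetraction, norm_smul, Real.norm_of_nonneg (by positivity),
      min_mul_of_nonneg _ _ hx.le, one_mul, div_mul_cancel₀ _ hx.ne']

lemma radialRetraction_of_norm_le {R : ℝ} {x : E} (hx : ‖x‖ ≤ R) : radialRetraction R x = x := by
  rcases (norm_nonneg x).eq_or_lt with hx0 | hx0
  · simp [norm_eq_zero.mp hx0.symm, radialRetraction]
  · rw [radialRetraction, min_eq_left ((one_le_div hx0).mpr hx), one_smul]

lemma lipschitzWith_radialRetraction {R : ℝ} (hR : 0 ≤ R) :
    LipschitzWith 2 (radialRetraction R : E → E) := by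
  refine LipschitzWith.of_dist_le_mul fun x y => ?_
  wlog hxy : ‖y‖ ≤ ‖x‖ generalizing x y
  · rw [dist_comm, dist_comm x]; exact this y x (le_of_not_ge hxy)
  set s : ℝ := min 1 (R / ‖x‖)
  have hs0 : 0 ≤ s := le_min zero_le_one (by positivity)
  have hs1 : s ≤ 1 := min_le_left _ _
  have hsx : s * ‖x‖ = min ‖x‖ R := by
    rw [← norm_radialRetraction hR x, radialRetraction, norm_smul, Real.norm_of_nonneg hs0]
  have hsplit : radialRetraction R x - radialRetraction R y
      = s • (x - y) + (s • y - radialRetraction R y) := by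
    rw [radialRetraction, smul_sub]; abel
  have hdiff : ‖s • y - radialRetraction R y‖ ≤ ‖x‖ - ‖y‖ := by
    set t : ℝ := min 1 (R / ‖y‖)
    have hty : t * ‖y‖ = min ‖y‖ R := by
      rw [← norm_radialRetraction hR y, radialRetraction, norm_smul,
        Real.norm_of_nonneg (le_min zero_le_one (by positivity))]
    rw [show radialRetraction R y = t • y from rfl, ← sub_smul, norm_smul, Real.norm_eq_abs,
      ← abs_norm y, ← abs_mul, abs_norm, sub_mul, hty]
    have h1 : s * ‖y‖ ≤ min ‖y‖ R :=
      le_min (by nlinarith [norm_nonneg y])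
        (by nlinarith [norm_nonneg y, min_le_right ‖x‖ R])
    have h2 : min ‖y‖ R ≤ min ‖x‖ R := min_le_min_right R hxy
    rw [abs_le]; constructor <;> nlinarith
  rw [dist_eq_norm, dist_eq_norm, NNReal.coe_ofNat, hsplit]
  calc ‖s • (x - y) + (s • y - radialRetraction R y)‖
      ≤ s * ‖x - y‖ + (‖x‖ - ‖y‖) := by
        refine (norm_add_le _ _).trans (add_le_add ?_ hdiff)
        rw [norm_smul, Real.norm_of_nonneg hs0]
    _ ≤ 2 * ‖x - y‖ := by
        nlinarith [norm_sub_norm_le x y, norm_nonneg (x - y)]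

end RadialRetraction

theorem AbsolutelyContinuousOnInterval.of_dist_le_mul {X Y : Type*} [PseudoMetricSpace X]
    [PseudoMetricSpace Y] {f : ℝ → X} {g : ℝ → Y} {a b K : ℝ}
    (hg : AbsolutelyContinuousOnInterval g a b)
    (hfg : ∀ x ∈ uIcc a b, ∀ y ∈ uIcc a b, dist (f x) (f y) ≤ K * dist (g x) (g y)) :
    AbsolutelyContinuousOnInterval f a b := by
  unfold AbsolutelyContinuousOnInterval at hg ⊢
  have hKg := hg.const_mul K
  rw [mul_zero] at hKg
  refine squeeze_zero' (Eventually.of_forall fun _ => Finset.sum_nonneg fun _ _ => dist_nonneg)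
    ?_ hKg
  filter_upwards [mem_inf_of_right (mem_principal_self _)] with E hE
  rw [Finset.mul_sum]
  exact Finset.sum_le_sum fun i hi => hfg _ (hE.1 i hi).1 _ (hE.1 i hi).2

section ChainRule

variable {E : Type*} [NormedAddCommGroup E] [NormedSpace ℝ E]

theorem IntervalIntegrable.absolutelyContinuousOnInterval_comp_primitive {h : ℝ → E} {c t : ℝ}
    (hh : IntervalIntegrable h volume c t) {Φ : E → ℝ} (hΦ : LocallyLipschitz Φ) (x₀ : E) :
    AbsolutelyContinuousOnInterval (fun s => Φ (x₀ + ∫ r in c..s, h r)) c t := by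
  set Y : ℝ → E := fun s => x₀ + ∫ r in c..s, h r
  have hYc : ContinuousOn Y (uIcc c t) :=
    continuousOn_const.add (intervalIntegral.continuousOn_primitive_interval' hh left_mem_uIcc)
  obtain ⟨K, hK⟩ := hΦ.locallyLipschitzOn.exists_lipschitzOnWith_of_compact
    (isCompact_uIcc.image_of_continuousOn hYc)
  have hN := hh.norm.absolutelyContinuousOnInterval_intervalIntegral (c := c) left_mem_uIcc
  refine hN.of_dist_le_mul (K := K) fun x hx y hy => ?_
  refine (hK.dist_le_mul _ (mem_image_of_mem Y hx) _ (mem_image_of_mem Y hy)).trans ?_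
  gcongr
  have hx' := hh.mono_set (uIcc_subset_uIcc left_mem_uIcc hx)
  have hy' := hh.mono_set (uIcc_subset_uIcc left_mem_uIcc hy)
  rw [dist_eq_norm, dist_eq_norm, Real.norm_eq_abs, add_sub_add_left_eq_sub,
    intervalIntegral.integral_interval_sub_left hx' hy',
    intervalIntegral.integral_interval_sub_left hx'.norm hy'.norm]
  exact intervalIntegral.norm_integral_le_abs_integral_norm

variable [CompleteSpace E]

theorem IntervalIntegrable.ae_deriv_comp_primitive {h : ℝ → E} {c t : ℝ}
    (hh : IntervalIntegrable h volume c t) {Φ : E → ℝ} (hΦ : ContDiff ℝ 1 Φ) (x₀ : E) :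
    ∀ᵐ s, s ∈ uIcc c t → deriv (fun s => Φ (x₀ + ∫ r in c..s, h r)) s
      = fderiv ℝ Φ (x₀ + ∫ r in c..s, h r) (h s) := by
  filter_upwards [hh.ae_hasDerivAt_integral] with s hs hst
  exact ((hΦ.differentiable one_ne_zero _).hasFDerivAt.comp_hasDerivAt s
    ((hs hst c left_mem_uIcc).const_add x₀)).deriv

theorem IntervalIntegrable.integral_fderiv_comp_primitive {h : ℝ → E} {c t : ℝ}
    (hh : IntervalIntegrable h volume c t) {Φ : E → ℝ} (hΦ : ContDiff ℝ 1 Φ) (x₀ : E) :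
    IntervalIntegrable (fun s => fderiv ℝ Φ (x₀ + ∫ r in c..s, h r) (h s)) volume c t ∧
      ∫ s in c..t, fderiv ℝ Φ (x₀ + ∫ r in c..s, h r) (h s)
        = Φ (x₀ + ∫ r in c..t, h r) - Φ x₀ := by
  have hAC := hh.absolutelyContinuousOnInterval_comp_primitive hΦ.locallyLipschitz x₀
  have hd := hh.ae_deriv_comp_primitive hΦ x₀
  refine ⟨hAC.intervalIntegrable_deriv.congr_ae ?_, ?_⟩
  · rw [EventuallyEq, ae_restrict_iff' measurableSet_uIoc]
    filter_upwards [hd] with s hs hst using hs (uIoc_subset_uIcc hst)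
  · rw [← intervalIntegral.integral_congr_ae (hd.mono fun s hs hst => hs (uIoc_subset_uIcc hst)),
      hAC.integral_deriv_eq_sub]
    simp

end ChainRule

theorem IntervalIntegrable.integral_deriv_comp_primitive_mul {A : ℝ → ℝ} {c t : ℝ}
    (hA : IntervalIntegrable A volume c t) {Φ : ℝ → ℝ} (hΦ : ContDiff ℝ 1 Φ) :
    ∫ s in c..t, deriv Φ (∫ r in c..s, A r) * A s = Φ (∫ r in c..t, A r) - Φ 0 := by
  have := (hA.integral_fderiv_comp_primitive hΦ 0).2
  simp only [zero_add] at this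
  rw [← this]
  congr 1 with s
  rw [mul_comm, ← smul_eq_mul, ← fderiv_apply_one_eq_deriv, ← ContinuousLinearMap.map_smul,
    smul_eq_mul, mul_one]

theorem IntervalIntegrable.integral_pow_primitive_mul {A : ℝ → ℝ} {c t : ℝ}
    (hA : IntervalIntegrable A volume c t) (n : ℕ) :
    ∫ s in c..t, (∫ r in c..s, A r) ^ n / n.factorial * A s
      = (∫ r in c..t, A r) ^ (n + 1) / (n + 1).factorial := by
  have h := hA.integral_deriv_comp_primitive_mul
    (Φ := fun y : ℝ => y ^ (n + 1) / ((n + 1).factorial : ℝ)) (by fun_prop)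
  simp only [deriv_div_const, deriv_pow_field, Nat.add_sub_cancel, ne_eq, Nat.succ_ne_zero,
    not_false_eq_true, zero_pow, zero_div, sub_zero] at h
  rw [← h]
  congr 1 with s
  rw [Nat.factorial_succ]
  push_cast
  field_simp

theorem le_two_mul_exp_of_le_add_integral {A u : ℝ → ℝ} {c d C : ℝ} (hcd : c ≤ d)
    (hA : IntervalIntegrable A volume c d) (hA0 : ∀ t ∈ Icc c d, 0 ≤ A t)
    (hu : ContinuousOn u (Icc c d)) (hC : 0 ≤ C)
    (hle : ∀ t ∈ Icc c d, u t ≤ C + ∫ s in c..t, A s * u s) :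
    ∀ t ∈ Icc c d, u t ≤ 2 * C * Real.exp (2 * ∫ s in c..d, A s) := by
  set L : ℝ → ℝ := fun t => ∫ s in c..t, A s
  have hAt : ∀ t ∈ Icc c d, IntervalIntegrable A volume c t := fun t ht =>
    hA.mono_set (uIcc_subset_uIcc_left (Icc_subset_uIcc ht))
  have hL : ContinuousOn L (Icc c d) := by
    simpa [uIcc_of_le hcd] using intervalIntegral.continuousOn_primitive_interval' hA left_mem_uIcc
  have hL0 : ∀ t ∈ Icc c d, 0 ≤ L t := fun t ht =>
    intervalIntegral.integral_nonneg ht.1 fun s hs => hA0 s ⟨hs.1, hs.2.trans ht.2⟩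
  have hLd : ∀ t ∈ Icc c d, L t ≤ L d := fun t ht =>
    intervalIntegral.integral_mono_interval le_rfl ht.1 ht.2
      ((ae_restrict_iff' measurableSet_Ioc).2 (Eventually.of_forall fun s hs =>
        hA0 s (Ioc_subset_Icc_self hs))) hA
  -- maximising `u * exp (-2 L)` rather than `u * exp (-L)` leaves the slack closing the estimate
  obtain ⟨t₀, ht₀, hmax⟩ := isCompact_Icc.exists_isMaxOn (nonempty_Icc.2 hcd)
    (hu.mul (continuousOn_const.mul hL).neg.rexp)
  set m := u t₀ * Real.exp (-(2 * L t₀))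
  have hub : ∀ t ∈ Icc c d, u t ≤ m * Real.exp (2 * L t) := fun t ht => by
    have : u t * Real.exp (-(2 * L t)) ≤ m := hmax ht
    rwa [Real.exp_neg, ← div_eq_mul_inv, div_le_iff₀ (Real.exp_pos _)] at this
  have hΦ : ∀ y, HasDerivAt (fun y => Real.exp (2 * y) / 2) (Real.exp (2 * y)) y := fun y => by
    simpa using (((hasDerivAt_id y).const_mul 2).exp).div_const 2
  have hprim : ∫ s in c..t₀, Real.exp (2 * L s) * A s = Real.exp (2 * L t₀) / 2 - 1 / 2 := by
    have := (hAt t₀ ht₀).integral_deriv_comp_primitive_mul (Φ := fun y => Real.exp (2 * y) / 2)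
      (by fun_prop)
    simpa [fun y => (hΦ y).deriv] using this
  have hint : ∫ s in c..t₀, A s * u s ≤ m * (Real.exp (2 * L t₀) / 2 - 1 / 2) := by
    rw [← hprim, ← intervalIntegral.integral_const_mul]
    refine intervalIntegral.integral_mono_on ht₀.1 ((hAt t₀ ht₀).mul_continuousOn ?_)
      (((hAt t₀ ht₀).continuousOn_mul ?_).const_mul m) fun s hs => ?_
    · exact hu.mono (by rw [uIcc_of_le ht₀.1]; exact Icc_subset_Icc_right ht₀.2)
    · exact (continuousOn_const.mul hL).rexp.mono
        (by rw [uIcc_of_le ht₀.1]; exact Icc_subset_Icc_right ht₀.2)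
    · have hs' : s ∈ Icc c d := ⟨hs.1, hs.2.trans ht₀.2⟩
      nlinarith [mul_le_mul_of_nonneg_left (hub s hs') (hA0 s hs')]
  have hm : m ≤ 2 * C := by
    have hq0 := Real.exp_pos (-(2 * L t₀))
    have hq1 : Real.exp (-(2 * L t₀)) ≤ 1 := Real.exp_le_one_iff.2 (by linarith [hL0 t₀ ht₀])
    have hqq : Real.exp (2 * L t₀) * Real.exp (-(2 * L t₀)) = 1 := by
      rw [← Real.exp_add]; simp
    have := mul_le_mul_of_nonneg_right (show u t₀ ≤ C + m * (Real.exp (2 * L t₀) / 2 - 1 / 2) by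
      linarith [hle t₀ ht₀]) hq0.le
    nlinarith
  intro t ht
  calc u t ≤ m * Real.exp (2 * L t) := hub t ht
    _ ≤ 2 * C * Real.exp (2 * L d) := by
      gcongr
      exact hLd t ht

theorem exists_isFixedPt_of_dist_iterate_le {α : Type*} [MetricSpace α] [CompleteSpace α]
    [Nonempty α] {T : α → α} {K : ℝ} (hK : 0 ≤ K)
    (hT : ∀ n x y, dist (T^[n] x) (T^[n] y) ≤ K ^ n / n.factorial * dist x y) :
    ∃ x, Function.IsFixedPt T x := by
  obtain ⟨n, hn⟩ := ((FloorSemiring.tendsto_pow_div_factorial_atTop K).eventually_lt_const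
    one_pos).exists
  have hcontr : ContractingWith ⟨K ^ n / n.factorial, by positivity⟩ T^[n] :=
    ⟨by exact_mod_cast hn, LipschitzWith.of_dist_le_mul fun x y => hT n x y⟩
  exact ⟨_, hcontr.isFixedPt_fixedPoint_iterate⟩

theorem aestronglyMeasurable_comp_of_continuousOn {E : Type*} [NormedAddCommGroup E]
    [MeasurableSpace E] [BorelSpace E] [SecondCountableTopology E] {F : ℝ → E → E} {s : Set ℝ}
    (hs : MeasurableSet s) (hFm : ∀ x, Measurable fun t => F t x)
    (hFc : ∀ t ∈ s, Continuous (F t)) {u : ℝ → E} (hu : Continuous u) :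
    AEStronglyMeasurable (fun t => F t (u t)) (volume.restrict s) := by
  classical
  set F' : ℝ → E → E := fun t x => if t ∈ s then F t x else 0
  have hF' : Measurable (Function.uncurry fun x t => F' t x) :=
    measurable_uncurry_of_continuous_of_measurable
      (fun t => by by_cases ht : t ∈ s <;> simp [F', ht, hFc t, continuous_const])
      (fun x => (hFm x).ite hs measurable_const)
  refine (hF'.comp (hu.measurable.prodMk measurable_id)).aestronglyMeasurable.congr ?_
  filter_upwards [ae_restrict_mem hs] with t ht
  simp [F', ht]

theorem intervalIntegrable_comp_of_norm_le {E : Type*} [NormedAddCommGroup E]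
    [MeasurableSpace E] [BorelSpace E] [SecondCountableTopology E] {F : ℝ → E → E} {β : ℝ → ℝ}
    {c d : ℝ} (hcd : c ≤ d) (hβ : IntervalIntegrable β volume c d)
    (hFm : ∀ x, Measurable fun t => F t x) (hFc : ∀ t ∈ Icc c d, Continuous (F t))
    (hFb : ∀ t ∈ Icc c d, ∀ x, ‖F t x‖ ≤ β t) {u : ℝ → E} (hu : Continuous u) :
    IntervalIntegrable (fun t => F t (u t)) volume c d := by
  rw [intervalIntegrable_iff_integrableOn_Ioc_of_le hcd]
  refine Integrable.mono' hβ.1 (aestronglyMeasurable_comp_of_continuousOn measurableSet_Ioc hFm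
    (fun t ht => hFc t (Ioc_subset_Icc_self ht)) hu) ?_
  filter_upwards [ae_restrict_mem measurableSet_Ioc] with s hs
  exact hFb s (Ioc_subset_Icc_self hs) _

theorem norm_integral_sub_le_pow_div_factorial {E : Type*} [NormedAddCommGroup E]
    [NormedSpace ℝ E] {f₁ f₂ : ℝ → E} {Λ : ℝ → ℝ} {c t δ : ℝ} (hct : c ≤ t)
    (hf₁ : IntervalIntegrable f₁ volume c t) (hf₂ : IntervalIntegrable f₂ volume c t)
    (hΛ : IntervalIntegrable Λ volume c t) (n : ℕ)
    (hle : ∀ s ∈ Ioc c t, ‖f₁ s - f₂ s‖ ≤ (∫ r in c..s, Λ r) ^ n / n.factorial * Λ s * δ) :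
    ‖(∫ s in c..t, f₁ s) - ∫ s in c..t, f₂ s‖
      ≤ (∫ r in c..t, Λ r) ^ (n + 1) / (n + 1).factorial * δ := by
  rw [← intervalIntegral.integral_sub hf₁ hf₂, ← hΛ.integral_pow_primitive_mul n,
    ← intervalIntegral.integral_mul_const]
  refine intervalIntegral.norm_integral_le_of_norm_le hct (Eventually.of_forall hle) ?_
  exact (hΛ.continuousOn_mul (((intervalIntegral.continuousOn_primitive_interval' hΛ
    left_mem_uIcc).pow n).div_const _)).mul_const _

theorem exists_unique_zero_of_strictAntiOn {w : ℝ → ℝ} {c d : ℝ} (hcd : c ≤ d)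
    (hw : ContinuousOn w (Icc c d)) (hanti : StrictAntiOn w (Icc c d)) (hc : 0 < w c)
    (hd : w d < 0) : ∃ t₁ ∈ Ioo c d, w t₁ = 0 ∧ ∀ t ∈ Icc c d, w t = 0 → t = t₁ := by
  obtain ⟨t₁, ht₁, hw₁⟩ := intermediate_value_Icc' hcd hw ⟨hd.le, hc.le⟩
  refine ⟨t₁, ⟨ht₁.1.lt_of_ne ?_, ht₁.2.lt_of_ne ?_⟩, hw₁, fun t ht hwt =>
    hanti.injOn ht ht₁ (hwt.trans hw₁.symm)⟩
  · rintro rfl; linarith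
  · rintro rfl; linarith

/-- How an integral equation forces its integrand to be integrable: where the integrand is not
integrable the integral is `0`, so the equation pins `Z` to a constant (`hZk`). -/
theorem intervalIntegrable_comp_of_eqOn_or_eq {E : Type*} [NormedAddCommGroup E]
    {F : ℝ → E → E} {Y Z : ℝ → E} {k : E} {c d : ℝ} (hcd : c ≤ d)
    (hY : IntervalIntegrable (fun s => F s (Y s)) volume c d)
    (hk : IntervalIntegrable (fun s => F s k) volume c d)
    (hYZ : ∀ u ∈ Icc c d, IntervalIntegrable (fun s => F s (Z s)) volume c u →
      EqOn Z Y (Ioc c u))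
    (hZk : ∀ u ∈ Ioc c d, ¬ IntervalIntegrable (fun s => F s (Z s)) volume c u → Z u = k) :
    IntervalIntegrable (fun s => F s (Z s)) volume c d := by
  set J := {u | u ∈ Icc c d ∧ IntervalIntegrable (fun s => F s (Z s)) volume c u}
  have hcJ : c ∈ J := ⟨left_mem_Icc.2 hcd, IntervalIntegrable.refl⟩
  have hJ : BddAbove J := ⟨d, fun u hu => hu.1.2⟩
  have hcb : c ≤ sSup J := le_csSup hJ hcJ
  have hbd : sSup J ≤ d := csSup_le ⟨c, hcJ⟩ fun u hu => hu.1.2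
  have hb : IntervalIntegrable (fun s => F s (Z s)) volume c (sSup J) := by
    rw [intervalIntegrable_iff_integrableOn_Ioo_of_le hcb]
    refine ((intervalIntegrable_iff_integrableOn_Ioo_of_le hcd).1 hY |>.mono_set
      (Ioo_subset_Ioo_right hbd)).congr_fun (fun s hs => ?_) measurableSet_Ioo
    obtain ⟨u, hu, hsu⟩ := exists_lt_of_lt_csSup ⟨c, hcJ⟩ hs.2
    rw [hYZ u hu.1 hu.2 ⟨hs.1, hsu.le⟩]
  rcases hbd.eq_or_lt with hbd | hbd
  · rwa [← hbd]
  refine hb.trans (hk.mono_set (uIcc_subset_uIcc_right (Icc_subset_uIcc ⟨hcb, hbd.le⟩))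
    |>.congr fun s hs => ?_)
  rw [uIoc_of_le hbd.le] at hs
  have hs' : ¬ IntervalIntegrable (fun s => F s (Z s)) volume c s := fun h =>
    not_le.2 hs.1 (le_csSup hJ ⟨⟨hcb.trans hs.1.le, hs.2⟩, h⟩)
  rw [hZk s ⟨hcb.trans_lt hs.1, hs.2⟩ hs']

section IntegralEquation

variable {E : Type*} [NormedAddCommGroup E] [NormedSpace ℝ E]

def IsIntegralSolution (F : ℝ → E → E) (x₀ : E) (c d : ℝ) (y : ℝ → E) : Prop :=
  IntervalIntegrable (fun s => F s (y s)) volume c d ∧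
    ∀ t ∈ Icc c d, y t = x₀ + ∫ s in c..t, F s (y s)

namespace IsIntegralSolution

variable {F G : ℝ → E → E} {x₀ : E} {c d : ℝ} {y : ℝ → E}

theorem continuousOn (hy : IsIntegralSolution F x₀ c d y) : ContinuousOn y (Icc c d) := by
  rcases le_or_gt c d with hcd | hcd
  · refine (continuousOn_const.add ?_).congr hy.2
    simpa [uIcc_of_le hcd] using
      intervalIntegral.continuousOn_primitive_interval' hy.1 left_mem_uIcc
  · simp [Icc_eq_empty_of_lt hcd]

theorem mono (hy : IsIntegralSolution F x₀ c d y) {u : ℝ} (hu : u ∈ Icc c d) :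
    IsIntegralSolution F x₀ c u y :=
  ⟨hy.1.mono_set (uIcc_subset_uIcc_left (Icc_subset_uIcc hu)),
    fun t ht => hy.2 t ⟨ht.1, ht.2.trans hu.2⟩⟩

theorem congr (hy : IsIntegralSolution F x₀ c d y) (hcd : c ≤ d)
    (hFG : ∀ s ∈ Icc c d, F s (y s) = G s (y s)) : IsIntegralSolution G x₀ c d y := by
  refine ⟨hy.1.congr fun s hs => ?_, fun t ht => ?_⟩
  · rw [uIoc_of_le hcd] at hs
    exact hFG s (Ioc_subset_Icc_self hs)
  · rw [hy.2 t ht, intervalIntegral.integral_congr fun s hs => ?_]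
    rw [uIcc_of_le ht.1] at hs
    exact hFG s ⟨hs.1, hs.2.trans ht.2⟩

theorem norm_le (hy : IsIntegralSolution F x₀ c d y) (hcd : c ≤ d) {α : ℝ → ℝ}
    (hα : IntervalIntegrable α volume c d) (hα0 : ∀ t ∈ Icc c d, 0 ≤ α t)
    (hF : ∀ t ∈ Icc c d, ‖F t (y t)‖ ≤ α t * (1 + ‖y t‖) + 1) :
    ∀ t ∈ Icc c d, ‖y t‖
      ≤ 2 * (‖x₀‖ + (∫ s in c..d, α s) + (d - c)) * Real.exp (2 * ∫ s in c..d, α s) := by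
  have hA : 0 ≤ ∫ s in c..d, α s := intervalIntegral.integral_nonneg hcd hα0
  refine le_two_mul_exp_of_le_add_integral hcd hα hα0 hy.continuousOn.norm (by
    linarith [norm_nonneg x₀]) fun t ht => ?_
  have hct : uIcc c t ⊆ uIcc c d := uIcc_subset_uIcc_left (Icc_subset_uIcc ht)
  have hαt := hα.mono_set hct
  have hyt : ContinuousOn (fun s => ‖y s‖) (uIcc c t) := hy.continuousOn.norm.mono (by
    rw [uIcc_of_le ht.1]; exact Icc_subset_Icc_right ht.2)
  have h1 : ‖y t‖ ≤ ‖x₀‖ + ∫ s in c..t, ‖F s (y s)‖ := by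
    rw [hy.2 t ht]
    exact (norm_add_le _ _).trans
      (by gcongr; exact intervalIntegral.norm_integral_le_integral_norm ht.1)
  have h2 : ∫ s in c..t, ‖F s (y s)‖ ≤ ∫ s in c..t, (α s + 1 + α s * ‖y s‖) :=
    intervalIntegral.integral_mono_on ht.1 (hy.1.mono_set hct).norm
      ((hαt.add intervalIntegrable_const).add (hαt.mul_continuousOn hyt)) fun s hs => by
        linarith [hF s ⟨hs.1, hs.2.trans ht.2⟩]
  have h3 : ∫ s in c..t, (α s + 1 + α s * ‖y s‖)
      = (∫ s in c..t, α s) + (t - c) + ∫ s in c..t, α s * ‖y s‖ := by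
    rw [intervalIntegral.integral_add (hαt.add intervalIntegrable_const)
      (hαt.mul_continuousOn hyt), intervalIntegral.integral_add hαt intervalIntegrable_const]
    simp
  have h4 : ∫ s in c..t, α s ≤ ∫ s in c..d, α s :=
    intervalIntegral.integral_mono_interval le_rfl ht.1 ht.2
      ((ae_restrict_iff' measurableSet_Ioc).2 (Eventually.of_forall fun s hs =>
        hα0 s (Ioc_subset_Icc_self hs))) hα
  linarith [ht.2]

theorem glue {j : E} {t₁ : ℝ} {ym yp : ℝ → E} (ht₁ : t₁ ∈ Icc c d)
    (hym : IsIntegralSolution F x₀ c d ym) (hyp : IsIntegralSolution F (ym t₁ + j) t₁ d yp)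
    (hy₁ : EqOn y ym (Icc c t₁))
    (hy₂ : EqOn y yp (Ioc t₁ d)) :
    (∀ t ∈ Icc c t₁, y t = x₀ + ∫ s in c..t, F s (y s)) ∧
      ∀ t ∈ Ioc t₁ d, y t = x₀ + j + ∫ s in c..t, F s (y s) := by
  have hF₁ : EqOn (fun s => F s (y s)) (fun s => F s (ym s)) (Icc c t₁) := fun s hs => by
    simp only [hy₁ hs]
  have hI₁ : ∀ t ∈ Icc c t₁, ∫ s in c..t, F s (y s) = ∫ s in c..t, F s (ym s) := fun t ht =>
    intervalIntegral.integral_congr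
      (hF₁.mono (by rw [uIcc_of_le ht.1]; exact Icc_subset_Icc_right ht.2))
  refine ⟨fun t ht => ?_, fun t ht => ?_⟩
  · rw [hI₁ t ht, hy₁ ht, hym.2 t ⟨ht.1, ht.2.trans ht₁.2⟩]
  have hF₂ : EqOn (fun s => F s (y s)) (fun s => F s (yp s)) (uIoc t₁ t) := fun s hs => by
    rw [uIoc_of_le ht.1.le] at hs
    simp only [hy₂ ⟨hs.1, hs.2.trans ht.2⟩]
  have hint₁ : IntervalIntegrable (fun s => F s (y s)) volume c t₁ :=
    (hym.mono ht₁).1.congr (hF₁.symm.mono (by rw [uIoc_of_le ht₁.1]; exact Ioc_subset_Icc_self))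
  have hint₂ : IntervalIntegrable (fun s => F s (y s)) volume t₁ t :=
    ((hyp.mono ⟨ht.1.le, ht.2⟩).1).congr hF₂.symm
  rw [← intervalIntegral.integral_add_adjacent_intervals hint₁ hint₂, hI₁ t₁ (right_mem_Icc.2
    ht₁.1), intervalIntegral.integral_congr_ae (Eventually.of_forall fun s hs => hF₂ hs),
    hy₂ ht, hyp.2 t ⟨ht.1.le, ht.2⟩, hym.2 t₁ ht₁]
  abel

theorem sub_le_mul_sub [CompleteSpace E] (hy : IsIntegralSolution F x₀ c d y) {Φ : E → ℝ}
    (hΦ : ContDiff ℝ 1 Φ) {κ : ℝ}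
    (hκ : ∀ t ∈ Icc c d, ∀ x, fderiv ℝ Φ x (F t x) ≤ κ) {s t : ℝ} (hs : s ∈ Icc c d)
    (ht : t ∈ Icc c d) (hst : s ≤ t) : Φ (y t) - Φ (y s) ≤ κ * (t - s) := by
  have hsub : ∀ r ∈ Icc s t, uIcc c r ⊆ uIcc c d := fun r hr =>
    uIcc_subset_uIcc_left (Icc_subset_uIcc ⟨hs.1.trans hr.1, hr.2.trans ht.2⟩)
  have hyr : ∀ r ∈ Icc s t, y s + ∫ u in s..r, F u (y u) = y r := fun r hr => by
    rw [hy.2 r ⟨hs.1.trans hr.1, hr.2.trans ht.2⟩, hy.2 s hs,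
      ← intervalIntegral.integral_interval_sub_left (hy.1.mono_set (hsub r hr))
        (hy.1.mono_set (hsub s ⟨le_rfl, hst⟩))]
    abel
  have hst' : IntervalIntegrable (fun u => F u (y u)) volume s t :=
    hy.1.mono_set (uIcc_subset_uIcc (Icc_subset_uIcc hs) (Icc_subset_uIcc ht))
  obtain ⟨hint, heq⟩ := hst'.integral_fderiv_comp_primitive hΦ (y s)
  rw [hyr t ⟨hst, le_rfl⟩] at heq
  rw [← heq]
  calc _ ≤ ∫ _ in s..t, κ := intervalIntegral.integral_mono_on hst hint intervalIntegrable_const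
        fun r hr => by rw [hyr r hr]; exact hκ r ⟨hs.1.trans hr.1, hr.2.trans ht.2⟩ _
    _ = κ * (t - s) := by rw [intervalIntegral.integral_const, smul_eq_mul, mul_comm]

theorem comp_sub_id_le [CompleteSpace E] (hy : IsIntegralSolution F x₀ c d y) {Φ : E → ℝ}
    (hΦ : ContDiff ℝ 1 Φ) {p' : ℝ} (hκ : ∀ t ∈ Icc c d, ∀ x, fderiv ℝ Φ x (F t x) ≤ 1 - p')
    {s t : ℝ} (hs : s ∈ Icc c d) (ht : t ∈ Icc c d) (hst : s ≤ t) :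
    Φ (y t) - t ≤ Φ (y s) - s - p' * (t - s) := by
  linarith [hy.sub_le_mul_sub hΦ hκ hs ht hst]

theorem exists_unique_pulse_time [CompleteSpace E] (hy : IsIntegralSolution F x₀ c d y)
    {τ : E → ℝ} (hτ : ContDiff ℝ 1 τ) (hτcd : ∀ x, τ x ∈ Ioo c d) {p' : ℝ} (hp' : 0 < p')
    (hκ : ∀ t ∈ Icc c d, ∀ x, fderiv ℝ τ x (F t x) ≤ 1 - p') :
    ∃ t₁ ∈ Ioo c d, τ (y t₁) = t₁ ∧ ∀ t ∈ Icc c d, τ (y t) = t → t = t₁ := by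
  have hcd : c ≤ d := ((hτcd x₀).1.trans (hτcd x₀).2).le
  have hyc : y c = x₀ := by simpa using hy.2 c (left_mem_Icc.2 hcd)
  obtain ⟨t₁, ht₁, hτ₁, hunique⟩ := exists_unique_zero_of_strictAntiOn (w := fun t => τ (y t) - t)
    hcd ((hτ.continuous.comp_continuousOn hy.continuousOn).sub continuousOn_id)
    (fun s hs t ht hst => by
      linarith [hy.comp_sub_id_le hτ hκ hs ht hst.le, mul_pos hp' (sub_pos.2 hst)])
    (by simpa [hyc] using (hτcd x₀).1) (by linarith [(hτcd (y d)).2])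
  exact ⟨t₁, ht₁, sub_eq_zero.1 hτ₁, fun t ht hτt => hunique t ht (sub_eq_zero.2 hτt)⟩

end IsIntegralSolution

end IntegralEquation

section Caratheodory

variable {E : Type*} [NormedAddCommGroup E] [MeasurableSpace E]

structure CaratheodoryLinearGrowth (g : ℝ → E → E) (α : ℝ → ℝ) (c d : ℝ) : Prop where
  measurable : ∀ x, Measurable fun t => g t x
  integrableOn : IntegrableOn α (Icc c d)
  nonneg : ∀ t, 0 ≤ α t
  norm_le : ∀ t ∈ Icc c d, ∀ x, ‖g t x‖ ≤ α t * (1 + ‖x‖) + 1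
  lipschitz : ∀ R > (0 : ℝ), ∃ Λ : ℝ → ℝ, IntegrableOn Λ (Icc c d) ∧ (∀ t, 0 ≤ Λ t) ∧
    ∀ t ∈ Icc c d, ∀ x ∈ closedBall (0 : E) R, ∀ x' ∈ closedBall (0 : E) R,
      ‖g t x - g t x'‖ ≤ Λ t * ‖x - x'‖

variable {g : ℝ → E → E} {α : ℝ → ℝ} {c d : ℝ}

theorem CaratheodoryLinearGrowth.mono (hg : CaratheodoryLinearGrowth g α c d) {c' d' : ℝ}
    (hc : c ≤ c') (hd : d' ≤ d) :
    CaratheodoryLinearGrowth g α c' d' := by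
  have hsub : Icc c' d' ⊆ Icc c d := Icc_subset_Icc hc hd
  refine ⟨hg.measurable, hg.integrableOn.mono_set hsub, hg.nonneg,
    fun t ht => hg.norm_le t (hsub ht), fun R hR => ?_⟩
  obtain ⟨Λ, hΛ, hΛ0, hΛl⟩ := hg.lipschitz R hR
  exact ⟨Λ, hΛ.mono_set hsub, hΛ0, fun t ht => hΛl t (hsub ht)⟩

theorem CaratheodoryLinearGrowth.intervalIntegrable_comp_const [BorelSpace E]
    [SecondCountableTopology E] (hg : CaratheodoryLinearGrowth g α c d) (hcd : c ≤ d) (x : E) :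
    IntervalIntegrable (fun t => g t x) volume c d := by
  rw [intervalIntegrable_iff_integrableOn_Icc_of_le hcd]
  have h1 : IntegrableOn (fun _ => (1 : ℝ)) (Icc c d) := integrableOn_const measure_Icc_lt_top.ne
  refine Integrable.mono' ((hg.integrableOn.mul_const (1 + ‖x‖)).add h1)
    (hg.measurable x).aestronglyMeasurable ?_
  filter_upwards [ae_restrict_mem measurableSet_Icc] with t ht using hg.norm_le t ht x

variable [NormedSpace ℝ E]

theorem CaratheodoryLinearGrowth.norm_le_of_isIntegralSolution
    (hg : CaratheodoryLinearGrowth g α c d) (hcd : c ≤ d)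
    {x₀ : E} {y : ℝ → E} (hy : IsIntegralSolution g x₀ c d y) :
    ∀ t ∈ Icc c d, ‖y t‖
      ≤ 2 * (‖x₀‖ + (∫ s in c..d, α s) + (d - c)) * Real.exp (2 * ∫ s in c..d, α s) :=
  hy.norm_le hcd ((intervalIntegrable_iff_integrableOn_Icc_of_le hcd).2 hg.integrableOn)
    (fun t _ => hg.nonneg t) fun t ht => hg.norm_le t ht (y t)

theorem CaratheodoryLinearGrowth.eqOn (hg : CaratheodoryLinearGrowth g α c d) (hcd : c ≤ d)
    {x₀ : E} {y z : ℝ → E}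
    (hy : IsIntegralSolution g x₀ c d y) (hz : IsIntegralSolution g x₀ c d z) :
    EqOn y z (Icc c d) := by
  set R := 2 * (‖x₀‖ + (∫ s in c..d, α s) + (d - c)) * Real.exp (2 * ∫ s in c..d, α s)
  obtain ⟨Λ, hΛ, hΛ0, hΛl⟩ := hg.lipschitz (max R 1) (lt_max_of_lt_right one_pos)
  have hball : ∀ {w : ℝ → E}, IsIntegralSolution g x₀ c d w →
      ∀ t ∈ Icc c d, w t ∈ closedBall (0 : E) (max R 1) := fun hw t ht =>
    mem_closedBall_zero_iff.2 ((hg.norm_le_of_isIntegralSolution hcd hw t ht).trans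
      (le_max_left _ _))
  have hle : ∀ t ∈ Icc c d, ‖y t - z t‖ ≤ 0 + ∫ s in c..t, Λ s * ‖y s - z s‖ := by
    intro t ht
    have hct : uIcc c t ⊆ uIcc c d := uIcc_subset_uIcc_left (Icc_subset_uIcc ht)
    rw [hy.2 t ht, hz.2 t ht, add_sub_add_left_eq_sub, zero_add,
      ← intervalIntegral.integral_sub (hy.1.mono_set hct) (hz.1.mono_set hct)]
    refine intervalIntegral.norm_integral_le_of_norm_le ht.1 (Eventually.of_forall
      fun s hs => ?_) (((intervalIntegrable_iff_integrableOn_Icc_of_le hcd).2 hΛ).mono_set hct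
        |>.mul_continuousOn ?_)
    · have hs' : s ∈ Icc c d := ⟨hs.1.le, hs.2.trans ht.2⟩
      exact hΛl s hs' _ (hball hy s hs') _ (hball hz s hs')
    · refine (hy.continuousOn.sub hz.continuousOn).norm.mono ?_
      rw [uIcc_of_le ht.1]; exact Icc_subset_Icc_right ht.2
  intro t ht
  have := le_two_mul_exp_of_le_add_integral hcd
    ((intervalIntegrable_iff_integrableOn_Icc_of_le hcd).2 hΛ) (fun t _ => hΛ0 t)
    (hy.continuousOn.sub hz.continuousOn).norm le_rfl hle t ht
  simpa [sub_eq_zero] using this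

theorem CaratheodoryLinearGrowth.eqOn_Ioc (hg : CaratheodoryLinearGrowth g α c d) (hcd : c ≤ d)
    {x₀ : E} {y z : ℝ → E}
    (hy : IsIntegralSolution g x₀ c d y) (hz : IntervalIntegrable (fun s => g s (z s)) volume c d)
    (hzeq : ∀ t ∈ Ioc c d, z t = x₀ + ∫ s in c..t, g s (z s)) : EqOn z y (Ioc c d) := by
  -- the equation on `(c, d]` says nothing about `z c`
  set z' := Function.update z c x₀
  have hupd : ∀ s, c < s → z' s = z s := fun s hs => Function.update_of_ne hs.ne' _ _
  have hz'z : ∀ s, c < s → g s (z' s) = g s (z s) := fun s hs => by rw [hupd s hs]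
  have hint : ∀ t, c ≤ t → ∫ s in c..t, g s (z' s) = ∫ s in c..t, g s (z s) := fun t ht =>
    intervalIntegral.integral_congr_ae (Eventually.of_forall fun s hs => by
      rw [uIoc_of_le ht] at hs; exact hz'z s hs.1)
  have hz' : IsIntegralSolution g x₀ c d z' := by
    refine ⟨hz.congr fun s hs => ?_, fun t ht => ?_⟩
    · rw [uIoc_of_le hcd] at hs; exact (hz'z s hs.1).symm
    · rcases ht.1.eq_or_lt with rfl | hct
      · simp [z']
      · rw [hint t ht.1, hupd t hct, hzeq t ⟨hct, ht.2⟩]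
  intro t ht
  have := hg.eqOn hcd hz' hy (Ioc_subset_Icc_self ht)
  rwa [hupd t ht.1] at this

variable [BorelSpace E] [SecondCountableTopology E]

theorem CaratheodoryLinearGrowth.eqOn_Ioc_of_eq_add_integral
    (hg : CaratheodoryLinearGrowth g α c d) {t₁ : ℝ}
    (ht₁ : t₁ ∈ Icc c d) {x₀ j : E} {ym yp z : ℝ → E} (hym : IsIntegralSolution g x₀ c t₁ ym)
    (hyp : IsIntegralSolution g (ym t₁ + j) t₁ d yp) (hz₁ : EqOn z ym (Icc c t₁))
    (hz₂ : ∀ t ∈ Ioc t₁ d, z t = x₀ + j + ∫ s in c..t, g s (z s)) :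
    EqOn z yp (Ioc t₁ d) := by
  have hcongr : EqOn (fun s => g s (ym s)) (fun s => g s (z s)) (Icc c t₁) := fun s hs => by
    simp only [hz₁ hs]
  have hf₁ : IntervalIntegrable (fun s => g s (z s)) volume c t₁ :=
    hym.1.congr (hcongr.mono (by rw [uIoc_of_le ht₁.1]; exact Ioc_subset_Icc_self))
  have hI₁ : ∫ s in c..t₁, g s (z s) = ym t₁ - x₀ := by
    rw [← intervalIntegral.integral_congr (hcongr.mono (by rw [uIcc_of_le ht₁.1])),
      hym.2 t₁ (right_mem_Icc.2 ht₁.1)]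
    abel
  have hgood : ∀ u ∈ Icc t₁ d, IntervalIntegrable (fun s => g s (z s)) volume t₁ u →
      EqOn z yp (Ioc t₁ u) := fun u hu hfu =>
    (hg.mono ht₁.1 hu.2).eqOn_Ioc hu.1 (hyp.mono hu) hfu fun t ht => by
      rw [hz₂ t ⟨ht.1, ht.2.trans hu.2⟩, ← intervalIntegral.integral_add_adjacent_intervals hf₁
        (hfu.mono_set (uIcc_subset_uIcc_left (Icc_subset_uIcc ⟨ht.1.le, ht.2⟩))), hI₁]
      abel
  refine hgood d ⟨ht₁.2, le_rfl⟩ (intervalIntegrable_comp_of_eqOn_or_eq ht₁.2 hyp.1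
    ((hg.mono ht₁.1 le_rfl).intervalIntegrable_comp_const ht₁.2 (x₀ + j)) hgood
    fun u hu hnot => ?_)
  have hnot' : ¬ IntervalIntegrable (fun s => g s (z s)) volume c u := fun h =>
    hnot (h.mono_set (uIcc_subset_uIcc_right (Icc_subset_uIcc ⟨ht₁.1, hu.1.le⟩)))
  rw [hz₂ u hu, intervalIntegral.integral_undef hnot', add_zero]

theorem CaratheodoryLinearGrowth.eqOn_of_eq_add_integral
    (hg : CaratheodoryLinearGrowth g α c d) (hcd : c ≤ d)
    {x₀ : E} {y z : ℝ → E} (hy : IsIntegralSolution g x₀ c d y)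
    (hz : ∀ t ∈ Icc c d, z t = x₀ + ∫ s in c..t, g s (z s)) : EqOn z y (Icc c d) := by
  have hyc : y c = x₀ := by simpa using hy.2 c (left_mem_Icc.2 hcd)
  have hzc : z c = x₀ := by simpa using hz c (left_mem_Icc.2 hcd)
  have hIoc := hg.eqOn_Ioc_of_eq_add_integral (left_mem_Icc.2 hcd) (j := 0) (z := z)
    (hy.mono (left_mem_Icc.2 hcd)) (by rwa [add_zero, hyc])
    (fun t ht => by rw [le_antisymm ht.2 ht.1, hzc, hyc])
    fun t ht => by rw [add_zero]; exact hz t (Ioc_subset_Icc_self ht)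
  intro t ht
  rcases ht.1.eq_or_lt with rfl | hct
  · rw [hzc, hyc]
  · exact hIoc ⟨hct, ht.2⟩

variable [CompleteSpace E]

theorem exists_isIntegralSolution_of_lipschitz {F : ℝ → E → E} {β Λ : ℝ → ℝ} {c d : ℝ}
    (hcd : c ≤ d) (hβ : IntervalIntegrable β volume c d) (hΛ : IntervalIntegrable Λ volume c d)
    (hΛ0 : ∀ t ∈ Icc c d, 0 ≤ Λ t) (hFm : ∀ x, Measurable fun t => F t x)
    (hFb : ∀ t ∈ Icc c d, ∀ x, ‖F t x‖ ≤ β t)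
    (hFl : ∀ t ∈ Icc c d, ∀ x x', ‖F t x - F t x'‖ ≤ Λ t * ‖x - x'‖) (x₀ : E) :
    ∃ y, IsIntegralSolution F x₀ c d y := by
  have : Nonempty (Icc c d) := ⟨⟨c, left_mem_Icc.2 hcd⟩⟩
  set p : ℝ → Icc c d := projIcc c d hcd
  have hFc : ∀ t ∈ Icc c d, Continuous (F t) := fun t ht =>
    (LipschitzWith.of_dist_le' (K := Λ t) fun x x' => by
      simpa [dist_eq_norm] using hFl t ht x x').continuous
  have hint : ∀ u : C(Icc c d, E), IntervalIntegrable (fun s => F s (u (p s))) volume c d :=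
    fun u => intervalIntegrable_comp_of_norm_le hcd hβ hFm hFc hFb
      (u.continuous.comp continuous_projIcc)
  have hcont : ∀ u : C(Icc c d, E),
      ContinuousOn (fun t => x₀ + ∫ s in c..t, F s (u (p s))) (Icc c d) := fun u => by
    have := intervalIntegral.continuousOn_primitive_interval' (hint u) left_mem_uIcc
    rw [uIcc_of_le hcd] at this
    exact continuousOn_const.add this
  let T : C(Icc c d, E) → C(Icc c d, E) := fun u =>
    ⟨fun t => x₀ + ∫ s in c..(t : ℝ), F s (u (p s)), (hcont u).domRestrict⟩
  set L : ℝ → ℝ := fun t => ∫ s in c..t, Λ s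
  have hL0 : ∀ t ∈ Icc c d, 0 ≤ L t := fun t ht =>
    intervalIntegral.integral_nonneg ht.1 fun s hs => hΛ0 s ⟨hs.1, hs.2.trans ht.2⟩
  have hLd : ∀ t ∈ Icc c d, L t ≤ L d := fun t ht =>
    intervalIntegral.integral_mono_interval le_rfl ht.1 ht.2
      ((ae_restrict_iff' measurableSet_Ioc).2 (Eventually.of_forall fun s hs =>
        hΛ0 s (Ioc_subset_Icc_self hs))) hΛ
  have hiter : ∀ n u v (t : Icc c d),
      dist (T^[n] u t) (T^[n] v t) ≤ L t ^ n / n.factorial * dist u v := by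
    intro n u v
    induction n with
    | zero => intro t; simpa using ContinuousMap.dist_apply_le_dist t
    | succ n ih =>
      intro t
      have hct : uIcc c t ⊆ uIcc c d := uIcc_subset_uIcc_left (Icc_subset_uIcc t.2)
      rw [Function.iterate_succ_apply', Function.iterate_succ_apply']
      change dist (x₀ + ∫ s in c..(t : ℝ), _) (x₀ + ∫ s in c..(t : ℝ), _) ≤ _
      rw [dist_add_left, dist_eq_norm]
      refine norm_integral_sub_le_pow_div_factorial t.2.1 ((hint _).mono_set hct)
        ((hint _).mono_set hct) (hΛ.mono_set hct) n fun s hs => ?_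
      have hs' : s ∈ Icc c d := ⟨hs.1.le, hs.2.trans t.2.2⟩
      rw [show p s = ⟨s, hs'⟩ from projIcc_of_mem hcd hs']
      calc _ ≤ Λ s * ‖T^[n] u ⟨s, hs'⟩ - T^[n] v ⟨s, hs'⟩‖ := hFl s hs' _ _
        _ ≤ Λ s * (L s ^ n / n.factorial * dist u v) := by
          gcongr
          · exact hΛ0 s hs'
          · rw [← dist_eq_norm]; exact ih ⟨s, hs'⟩
        _ = _ := by ring
  have hLd0 : 0 ≤ L d := hL0 d (right_mem_Icc.2 hcd)
  obtain ⟨u, hu⟩ := exists_isFixedPt_of_dist_iterate_le hLd0 fun n u v =>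
    (ContinuousMap.dist_le (by positivity)).2 fun t => (hiter n u v t).trans <| by
      gcongr
      · exact hL0 t t.2
      · exact hLd t t.2
  refine ⟨fun t => u (p t), hint u, fun t ht => ?_⟩
  calc u (p t) = T u ⟨t, ht⟩ := by rw [show p t = ⟨t, ht⟩ from projIcc_of_mem hcd ht, hu.eq]
    _ = _ := rfl

theorem CaratheodoryLinearGrowth.exists_isIntegralSolution
    (hg : CaratheodoryLinearGrowth g α c d) (hcd : c ≤ d)
    (x₀ : E) : ∃ y, IsIntegralSolution g x₀ c d y := by
  set R := max (2 * (‖x₀‖ + (∫ s in c..d, α s) + (d - c)) * Real.exp (2 * ∫ s in c..d, α s)) 1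
  have hR : 0 < R := lt_max_of_lt_right one_pos
  obtain ⟨Λ, hΛ, hΛ0, hΛl⟩ := hg.lipschitz R hR
  set P : E → E := radialRetraction R
  have hPR : ∀ x, P x ∈ closedBall (0 : E) R := fun x => by
    rw [mem_closedBall_zero_iff, norm_radialRetraction hR.le]; exact min_le_right _ _
  have hPx : ∀ x, ‖P x‖ ≤ ‖x‖ := fun x => by
    rw [norm_radialRetraction hR.le]; exact min_le_left _ _
  have hα := (intervalIntegrable_iff_integrableOn_Icc_of_le hcd).2 hg.integrableOn
  -- truncate `g` outside the ball to which the a priori bound confines solutions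
  obtain ⟨y, hy⟩ := exists_isIntegralSolution_of_lipschitz (F := fun t x => g t (P x))
    (β := fun t => α t * (1 + R) + 1) (Λ := fun t => 2 * Λ t) hcd
    ((hα.mul_const _).add intervalIntegrable_const)
    (((intervalIntegrable_iff_integrableOn_Icc_of_le hcd).2 hΛ).const_mul 2)
    (fun t _ => by linarith [hΛ0 t]) (fun x => hg.measurable (P x))
    (fun t ht x => (hg.norm_le t ht (P x)).trans (by
      gcongr; · exact hg.nonneg t
      · exact mem_closedBall_zero_iff.1 (hPR x)))
    (fun t ht x x' => (hΛl t ht _ (hPR x) _ (hPR x')).trans (by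
      have := (lipschitzWith_radialRetraction hR.le).dist_le_mul x x'
      rw [dist_eq_norm, dist_eq_norm, NNReal.coe_ofNat] at this
      nlinarith [hΛ0 t]))
    x₀
  have hyR : ∀ t ∈ Icc c d, ‖y t‖ ≤ R := fun t ht =>
    (hy.norm_le hcd hα (fun t _ => hg.nonneg t) (fun t ht => (hg.norm_le t ht _).trans (by
      gcongr; · exact hg.nonneg t
      · exact hPx _)) t ht).trans (le_max_left _ _)
  exact ⟨y, hy.congr hcd fun s hs => by simp only [P, radialRetraction_of_norm_le (hyR s hs)]⟩

def IsImpulsiveSolution (g : ℝ → E → E) (τ : E → ℝ) (I : E → E) (y₀ : E) (a : ℝ) (y : ℝ → E)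
    (t₁ : ℝ) : Prop :=
  t₁ ∈ Ioo 0 a ∧ τ (y t₁) = t₁ ∧ (∀ t ∈ Icc 0 a, τ (y t) = t → t = t₁) ∧
    (∀ t ∈ Icc 0 t₁, y t = y₀ + ∫ s in (0 : ℝ)..t, g s (y s)) ∧
    (∀ t ∈ Ioc t₁ a, y t = y₀ + I (y t₁) + ∫ s in (0 : ℝ)..t, g s (y s))

variable {a : ℝ} {τ : E → ℝ} {I : E → E} {y₀ : E}

theorem exists_isImpulsiveSolution (hg : CaratheodoryLinearGrowth g α 0 a)
    (hτ : ContDiff ℝ 1 τ) (hτa : ∀ x, τ x ∈ Ioo 0 a) (hτI : ∀ x, τ (x + I x) ≤ τ x) {p' : ℝ}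
    (hp' : 0 < p') (htrans : ∀ t ∈ Icc 0 a, ∀ x, fderiv ℝ τ x (g t x) - 1 < -p') (y₀ : E) :
    ∃ y t₁, IsImpulsiveSolution g τ I y₀ a y t₁ := by
  have hκ : ∀ t ∈ Icc 0 a, ∀ x, fderiv ℝ τ x (g t x) ≤ 1 - p' := fun t ht x => by
    linarith [htrans t ht x]
  obtain ⟨ym, hym⟩ := hg.exists_isIntegralSolution ((hτa y₀).1.trans (hτa y₀).2).le y₀
  obtain ⟨t₁, ht₁, hτ₁, hunique⟩ := hym.exists_unique_pulse_time hτ hτa hp' hκ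
  have ht₁' : t₁ ∈ Icc 0 a := ⟨ht₁.1.le, ht₁.2.le⟩
  obtain ⟨yp, hyp⟩ := (hg.mono ht₁.1.le le_rfl).exists_isIntegralSolution ht₁.2.le
    (ym t₁ + I (ym t₁))
  have hyp_lt : ∀ t ∈ Ioc t₁ a, τ (yp t) < t := fun t ht => by
    have hyp₁ : yp t₁ = ym t₁ + I (ym t₁) := by simpa using hyp.2 t₁ (left_mem_Icc.2 ht₁.2.le)
    have := hyp.comp_sub_id_le hτ (fun r hr => hκ r ⟨ht₁.1.le.trans hr.1, hr.2⟩)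
      (left_mem_Icc.2 ht₁.2.le) ⟨ht.1.le, ht.2⟩ ht.1.le
    rw [hyp₁] at this
    linarith [hτI (ym t₁), mul_pos hp' (sub_pos.2 ht.1)]
  set y := fun t => if t ≤ t₁ then ym t else yp t
  have hy₁ : EqOn y ym (Icc 0 t₁) := fun t ht => if_pos ht.2
  have hy₂ : EqOn y yp (Ioc t₁ a) := fun t ht => if_neg (not_le.2 ht.1)
  have hyt₁ : y t₁ = ym t₁ := hy₁ (right_mem_Icc.2 ht₁'.1)
  obtain ⟨hpre, hpost⟩ := hym.glue ht₁' hyp hy₁ hy₂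
  refine ⟨y, t₁, ht₁, hyt₁ ▸ hτ₁, fun t ht hτt => ?_, hpre, hyt₁ ▸ hpost⟩
  rcases le_or_gt t t₁ with h | h
  · exact hunique t ht (hy₁ ⟨ht.1, h⟩ ▸ hτt)
  · exact absurd hτt (hy₂ ⟨h, ht.2⟩ ▸ (hyp_lt t ⟨h, ht.2⟩).ne)

theorem IsImpulsiveSolution.unique (hg : CaratheodoryLinearGrowth g α 0 a) {y z : ℝ → E}
    {t₁ s₁ : ℝ} (hy : IsImpulsiveSolution g τ I y₀ a y t₁)
    (hz : IsImpulsiveSolution g τ I y₀ a z s₁) : s₁ = t₁ ∧ ∀ t ∈ Icc 0 a, z t = y t := by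
  obtain ⟨ht₁, hyτ, hyu, hy₁, hy₂⟩ := hy
  obtain ⟨hs₁, hzτ, hzu, hz₁, hz₂⟩ := hz
  have hagree : ∀ m, 0 ≤ m → m ≤ s₁ → m ≤ t₁ → EqOn z y (Icc 0 m) := fun m hm hms hmt => by
    have hgm := hg.mono le_rfl (hmt.trans ht₁.2.le)
    obtain ⟨w, hw⟩ := hgm.exists_isIntegralSolution hm y₀
    exact (hgm.eqOn_of_eq_add_integral hm hw fun t ht => hz₁ t ⟨ht.1, ht.2.trans hms⟩).trans
      (hgm.eqOn_of_eq_add_integral hm hw fun t ht => hy₁ t ⟨ht.1, ht.2.trans hmt⟩).symm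
  obtain rfl : s₁ = t₁ := by
    rcases le_total s₁ t₁ with h | h
    · exact hyu s₁ ⟨hs₁.1.le, hs₁.2.le⟩ (by
        rw [← hagree s₁ hs₁.1.le le_rfl h (right_mem_Icc.2 hs₁.1.le)]; exact hzτ)
    · exact (hzu t₁ ⟨ht₁.1.le, ht₁.2.le⟩ (by
        rw [hagree t₁ ht₁.1.le h le_rfl (right_mem_Icc.2 ht₁.1.le)]; exact hyτ)).symm
  have hg₁ := hg.mono le_rfl ht₁.2.le
  obtain ⟨w, hw⟩ := hg₁.exists_isIntegralSolution ht₁.1.le y₀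
  obtain ⟨wp, hwp⟩ := (hg.mono ht₁.1.le le_rfl).exists_isIntegralSolution ht₁.2.le
    (w s₁ + I (w s₁))
  have hzw := hg₁.eqOn_of_eq_add_integral ht₁.1.le hw hz₁
  have hyw := hg₁.eqOn_of_eq_add_integral ht₁.1.le hw hy₁
  have hpost : ∀ {v : ℝ → E}, EqOn v w (Icc 0 s₁) →
      (∀ t ∈ Ioc s₁ a, v t = y₀ + I (v s₁) + ∫ s in (0 : ℝ)..t, g s (v s)) →
      EqOn v wp (Ioc s₁ a) := fun hvw hv =>
    hg.eqOn_Ioc_of_eq_add_integral ⟨ht₁.1.le, ht₁.2.le⟩ hw hwp hvw fun t ht => by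
      rw [hv t ht, hvw (right_mem_Icc.2 ht₁.1.le)]
  refine ⟨rfl, fun t ht => ?_⟩
  rcases le_or_gt t s₁ with h | h
  · rw [hzw ⟨ht.1, h⟩, hyw ⟨ht.1, h⟩]
  · rw [hpost hzw hz₂ ⟨h, ht.2⟩, hpost hyw hy₂ ⟨h, ht.2⟩]

end Caratheodory

theorem stmt18_general (a : ℝ) (N : ℕ)
    (g : ℝ → EuclideanSpace ℝ (Fin N) → EuclideanSpace ℝ (Fin N))
    (hmeas : ∀ x, Measurable (fun t => g t x))
    (α : ℝ → ℝ) (hα : IntegrableOn α (Icc 0 a)) (hα0 : ∀ t, 0 ≤ α t)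
    (hgrow : ∀ t ∈ Icc 0 a, ∀ x, ‖g t x‖ ≤ α t * (1 + ‖x‖) + 1)
    (hlip : ∀ R > (0:ℝ), ∃ Λ : ℝ → ℝ, IntegrableOn Λ (Icc 0 a) ∧ (∀ t, 0 ≤ Λ t) ∧
      ∀ t ∈ Icc 0 a, ∀ x ∈ closedBall (0 : EuclideanSpace ℝ (Fin N)) R,
        ∀ x' ∈ closedBall (0 : EuclideanSpace ℝ (Fin N)) R,
          ‖g t x - g t x'‖ ≤ Λ t * ‖x - x'‖)
    (τ : EuclideanSpace ℝ (Fin N) → ℝ) (hτ : ContDiff ℝ 1 τ)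
    (hτa : ∀ x, τ x ∈ Ioo 0 a)
    (I : EuclideanSpace ℝ (Fin N) → EuclideanSpace ℝ (Fin N))
    (hτI : ∀ x, τ (x + I x) ≤ τ x)
    (p' : ℝ) (hp' : 0 < p')
    (htrans : ∀ t ∈ Icc 0 a, ∀ x, fderiv ℝ τ x (g t x) - 1 < -p')
    (y₀ : EuclideanSpace ℝ (Fin N)) :
    ∃ (y : ℝ → EuclideanSpace ℝ (Fin N)) (t₁ : ℝ),
      (t₁ ∈ Ioo 0 a ∧ τ (y t₁) = t₁ ∧
        (∀ t ∈ Icc 0 a, τ (y t) = t → t = t₁) ∧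
        (∀ t ∈ Icc 0 t₁, y t = y₀ + ∫ s in (0:ℝ)..t, g s (y s)) ∧
        (∀ t ∈ Ioc t₁ a, y t = y₀ + I (y t₁) + ∫ s in (0:ℝ)..t, g s (y s))) ∧
      (∀ (z : ℝ → EuclideanSpace ℝ (Fin N)) (s₁ : ℝ),
        (s₁ ∈ Ioo 0 a ∧ τ (z s₁) = s₁ ∧
          (∀ t ∈ Icc 0 a, τ (z t) = t → t = s₁) ∧
          (∀ t ∈ Icc 0 s₁, z t = y₀ + ∫ s in (0:ℝ)..t, g s (z s)) ∧
          (∀ t ∈ Ioc s₁ a, z t = y₀ + I (z s₁) + ∫ s in (0:ℝ)..t, g s (z s))) →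
        s₁ = t₁ ∧ ∀ t ∈ Icc 0 a, z t = y t) := by
  have hg : CaratheodoryLinearGrowth g α 0 a := ⟨hmeas, hα, hα0, hgrow, hlip⟩
  obtain ⟨y, t₁, hy⟩ := exists_isImpulsiveSolution hg hτ hτa hτI hp' htrans y₀
  exact ⟨y, t₁, hy, fun z s₁ hz => hy.unique hg hz⟩

/-- Existence and uniqueness for the single-valued impulsive problem
`y' = g(t,y)` off the pulse hypersurface, `y(0) = y₀`, `y(t⁺) = y(t) + I(y(t))` at
`t = τ(y(t))`: there is exactly one solution on `[0,a]`, and it has exactly one jump. -/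
theorem stmt18 (a : ℝ) (ha : 0 < a) (N : ℕ)
    (g : ℝ → EuclideanSpace ℝ (Fin N) → EuclideanSpace ℝ (Fin N))
    (hmeas : ∀ x, Measurable (fun t => g t x))
    (α : ℝ → ℝ) (hα : IntegrableOn α (Icc 0 a)) (hα0 : ∀ t, 0 ≤ α t)
    (hgrow : ∀ t ∈ Icc 0 a, ∀ x, ‖g t x‖ ≤ α t * (1 + ‖x‖) + 1)
    (hlip : ∀ R > (0:ℝ), ∃ Λ : ℝ → ℝ, IntegrableOn Λ (Icc 0 a) ∧ (∀ t, 0 ≤ Λ t) ∧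
      ∀ t ∈ Icc 0 a, ∀ x ∈ closedBall (0 : EuclideanSpace ℝ (Fin N)) R,
        ∀ x' ∈ closedBall (0 : EuclideanSpace ℝ (Fin N)) R,
          ‖g t x - g t x'‖ ≤ Λ t * ‖x - x'‖)
    (τ : EuclideanSpace ℝ (Fin N) → ℝ) (hτ : ContDiff ℝ 1 τ)
    (hτa : ∀ x, τ x ∈ Ioo 0 a)
    (I : EuclideanSpace ℝ (Fin N) → EuclideanSpace ℝ (Fin N)) (hI : Continuous I)
    (hτI : ∀ x, τ (x + I x) ≤ τ x)
    (p' : ℝ) (hp' : 0 < p')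
    (htrans : ∀ t ∈ Icc 0 a, ∀ x, fderiv ℝ τ x (g t x) - 1 < -p')
    (y₀ : EuclideanSpace ℝ (Fin N)) :
    ∃ (y : ℝ → EuclideanSpace ℝ (Fin N)) (t₁ : ℝ),
      (t₁ ∈ Ioo 0 a ∧ τ (y t₁) = t₁ ∧
        (∀ t ∈ Icc 0 a, τ (y t) = t → t = t₁) ∧
        (∀ t ∈ Icc 0 t₁, y t = y₀ + ∫ s in (0:ℝ)..t, g s (y s)) ∧
        (∀ t ∈ Ioc t₁ a, y t = y₀ + I (y t₁) + ∫ s in (0:ℝ)..t, g s (y s))) ∧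
      (∀ (z : ℝ → EuclideanSpace ℝ (Fin N)) (s₁ : ℝ),
        (s₁ ∈ Ioo 0 a ∧ τ (z s₁) = s₁ ∧
          (∀ t ∈ Icc 0 a, τ (z t) = t → t = s₁) ∧
          (∀ t ∈ Icc 0 s₁, z t = y₀ + ∫ s in (0:ℝ)..t, g s (z s)) ∧
          (∀ t ∈ Ioc s₁ a, z t = y₀ + I (z s₁) + ∫ s in (0:ℝ)..t, g s (z s))) →
        s₁ = t₁ ∧ ∀ t ∈ Icc 0 a, z t = y t) :=
  stmt18_general a N g hmeas α hα hα0 hgrow hlip τ hτ hτa I hτI p' hp' htrans y₀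
end

section
/- Under hypotheses (F0)–(F3) and (H1)₁–(H3)₁, every solution of the impulsive differential inclusion y'(t) ∈ F(t,y(t)) for t ≠ τ(y(t)), y(0) = y₀, y(t⁺) = y(t) + I(y(t)) at t = τ(y(t)), on [0,a], meets the pulse hypersurface Σ = {(t,x) : t = τ(x)} exactly once. -/
/-!
By transversality, `d/dt τ(y t) ≤ 1 - p < 1` almost everywhere along each arc of the solution, so
`t - τ(y t)` is strictly increasing on `[0, t₁]` and on `(t₁, a]`. It vanishes at `t₁`, hence is
negative before; the jump does not increase `τ`, so it starts nonnegative right after `t₁` and is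
positive there. The chain rule holds almost everywhere because `τ ∘ y` is absolutely continuous on
each arc: `τ` is locally Lipschitz and `y` is a primitive of an integrable function, whose
increments are controlled by the absolutely continuous `∫ ‖f‖`.
-/

open Set MeasureTheory Metric Filter

theorem AbsolutelyContinuousOnInterval.of_dist_le_mul_s19 {X : Type*} [PseudoMetricSpace X]
    {h : ℝ → X} {G : ℝ → ℝ} {a b K : ℝ} (hG : AbsolutelyContinuousOnInterval G a b)
    (hK : ∀ x ∈ uIcc a b, ∀ z ∈ uIcc a b, dist (h x) (h z) ≤ K * dist (G x) (G z)) :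
    AbsolutelyContinuousOnInterval h a b := by
  unfold AbsolutelyContinuousOnInterval at hG ⊢
  refine squeeze_zero' (.of_forall fun _ ↦ Finset.sum_nonneg fun _ _ ↦ dist_nonneg) ?_
    (by simpa using hG.const_mul K)
  rw [eventually_inf_principal]
  filter_upwards with ⟨n, I⟩ hnI
  rw [Finset.mul_sum]
  exact Finset.sum_le_sum fun i hi ↦ hK _ (hnI.1 i hi).1 _ (hnI.1 i hi).2

section

variable {E : Type*} [NormedAddCommGroup E] [NormedSpace ℝ E]

theorem LocallyLipschitz.absolutelyContinuousOnInterval_comp_intervalIntegral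
    {X : Type*} [PseudoMetricSpace X] {φ : E → X} (hφ : LocallyLipschitz φ) {g : ℝ → E}
    {a b : ℝ} (hg : IntervalIntegrable g volume a b) (c : E) :
    AbsolutelyContinuousOnInterval (fun u ↦ φ (c + ∫ r in a..u, g r)) a b := by
  set Y : ℝ → E := fun u ↦ c + ∫ r in a..u, g r
  have hY : ContinuousOn Y (uIcc a b) :=
    continuousOn_const.add (intervalIntegral.continuousOn_primitive_interval' hg left_mem_uIcc)
  obtain ⟨K, hK⟩ := hφ.locallyLipschitzOn.exists_lipschitzOnWith_of_compact
    (isCompact_uIcc.image_of_continuousOn hY)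
  have hg' : ∀ x ∈ uIcc a b, IntervalIntegrable g volume a x := fun x hx ↦
    hg.mono_set (uIcc_subset_uIcc left_mem_uIcc hx)
  refine (hg.norm.absolutelyContinuousOnInterval_intervalIntegral left_mem_uIcc).of_dist_le_mul_s19
    (K := K) fun x hx z hz ↦ ?_
  calc dist (φ (Y x)) (φ (Y z)) ≤ K * dist (Y x) (Y z) :=
        hK.dist_le_mul _ (mem_image_of_mem _ hx) _ (mem_image_of_mem _ hz)
    _ ≤ K * dist (∫ r in a..x, ‖g r‖) (∫ r in a..z, ‖g r‖) := by
      gcongr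
      rw [dist_eq_norm, dist_eq_norm, Real.norm_eq_abs, add_sub_add_left_eq_sub,
        intervalIntegral.integral_interval_sub_left (hg' x hx) (hg' z hz),
        intervalIntegral.integral_interval_sub_left (hg' x hx).norm (hg' z hz).norm]
      exact intervalIntegral.norm_integral_le_abs_integral_norm

/-- `y` only has to agree with the primitive on `Ioc s t`, so `y s` may be the value before a
jump at time `s`. -/
theorem ContDiff.sub_le_mul_of_ae_fderiv_le [CompleteSpace E] {τ : E → ℝ} (hτ : ContDiff ℝ 1 τ)
    {f y : ℝ → E} {c : E} {s t B : ℝ} (hst : s < t) (hf : IntervalIntegrable f volume s t)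
    (hy : ∀ u ∈ Ioc s t, y u = c + ∫ r in s..u, f r)
    (hB : ∀ᵐ u ∂volume.restrict (Icc s t), fderiv ℝ τ (y u) (f u) ≤ B) :
    τ (y t) - τ c ≤ B * (t - s) := by
  set Y : ℝ → E := fun u ↦ c + ∫ r in s..u, f r
  have hAC : AbsolutelyContinuousOnInterval (τ ∘ Y) s t :=
    hτ.locallyLipschitz.absolutelyContinuousOnInterval_comp_intervalIntegral hf c
  have hderiv : ∀ᵐ u ∂volume.restrict (Icc s t), deriv (τ ∘ Y) u ≤ B := by
    have hne : ∀ᵐ u ∂volume.restrict (Icc s t), u ≠ s :=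
      ae_restrict_of_ae (by simp [ae_iff, measure_singleton])
    filter_upwards [hB, ae_restrict_mem measurableSet_Icc,
      ae_restrict_of_ae hf.ae_hasDerivAt_integral, hne] with u hBu hu hYu hus
    have hYu' : HasDerivAt Y (f u) u :=
      (hYu (uIcc_of_le hst.le ▸ hu) s left_mem_uIcc).const_add c
    rwa [((hτ.differentiable one_ne_zero (Y u)).hasFDerivAt.comp_hasDerivAt u hYu').deriv,
      show Y u = y u from (hy u ⟨lt_of_le_of_ne hu.1 (Ne.symm hus), hu.2⟩).symm]
  calc τ (y t) - τ c = ∫ u in s..t, deriv (τ ∘ Y) u := by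
        rw [hAC.integral_deriv_eq_sub, hy t ⟨hst, le_rfl⟩]
        simp [Y]
    _ ≤ ∫ _ in s..t, B :=
        intervalIntegral.integral_mono_ae_restrict hst.le hAC.intervalIntegrable_deriv
          intervalIntegrable_const hderiv
    _ = B * (t - s) := by simp [mul_comm]

theorem ContDiff.sub_lt_of_ae_fderiv_le_one_sub [CompleteSpace E] {τ : E → ℝ}
    (hτ : ContDiff ℝ 1 τ) {f y : ℝ → E} {c : E} {a p s t : ℝ} (hp : 0 < p)
    (hf : IntegrableOn f (Icc 0 a))
    (hτy : ∀ᵐ u ∂volume.restrict (Icc 0 a), fderiv ℝ τ (y u) (f u) ≤ 1 - p)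
    (hs : s ∈ Icc 0 a) (ht : t ∈ Icc 0 a) (hst : s < t)
    (hy : ∀ u ∈ Ioc s t, y u = c + ∫ r in (0:ℝ)..u, f r) :
    τ (y t) - τ (c + ∫ r in (0:ℝ)..s, f r) < t - s := by
  have hint : ∀ x ∈ Icc 0 a, ∀ z ∈ Icc 0 a, IntervalIntegrable f volume x z :=
    fun x hx z hz ↦ (hf.mono_set (uIcc_subset_Icc hx hz)).intervalIntegrable
  have hy' : ∀ u ∈ Ioc s t, y u = (c + ∫ r in (0:ℝ)..s, f r) + ∫ r in s..u, f r := by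
    intro u hu
    rw [hy u hu, add_assoc, intervalIntegral.integral_add_adjacent_intervals
      (hint 0 (left_mem_Icc.2 (hs.1.trans hs.2)) s hs)
      (hint s hs u ⟨hs.1.trans hu.1.le, hu.2.trans ht.2⟩)]
  have := hτ.sub_le_mul_of_ae_fderiv_le hst (hint s hs t ht) hy'
    (ae_restrict_of_ae_restrict_of_subset (Icc_subset_Icc hs.1 ht.2) hτy)
  linarith [mul_pos hp (sub_pos.2 hst)]

end

theorem stmt19_general (a : ℝ) (N : ℕ)
    (F : ℝ → EuclideanSpace ℝ (Fin N) → Set (EuclideanSpace ℝ (Fin N)))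
    -- (H1)₁: continuous impulse function
    (I : EuclideanSpace ℝ (Fin N) → EuclideanSpace ℝ (Fin N))
    -- (H2)₁: τ is C¹, 0 < τ < a, τ(x + I(x)) ≤ τ(x), bounded gradient
    (τ : EuclideanSpace ℝ (Fin N) → ℝ) (hτ : ContDiff ℝ 1 τ)
    (hτI : ∀ x, τ (x + I x) ≤ τ x)
    -- (H3)₁: transversality
    (p : ℝ) (hp : 0 < p)
    (hH3 : ∀ᵐ t ∂(volume.restrict (Icc 0 a)), ∀ x, ∀ φ ∈ F t x,
      fderiv ℝ τ x φ - 1 ≤ -p)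
    -- a solution y with jump time t₁ and integrable selection f
    (y₀ : EuclideanSpace ℝ (Fin N)) (y : ℝ → EuclideanSpace ℝ (Fin N))
    (t₁ : ℝ) (ht₁ : t₁ ∈ Icc 0 a) (hjump : τ (y t₁) = t₁)
    (f : ℝ → EuclideanSpace ℝ (Fin N)) (hf : IntegrableOn f (Icc 0 a))
    (hsel : ∀ᵐ t ∂(volume.restrict (Icc 0 a)), f t ∈ F t (y t))
    (hy1 : ∀ t ∈ Icc 0 t₁, y t = y₀ + ∫ s in (0:ℝ)..t, f s)
    (hy2 : ∀ t ∈ Ioc t₁ a, y t = y₀ + I (y t₁) + ∫ s in (0:ℝ)..t, f s) :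
    ∃! t, t ∈ Icc 0 a ∧ τ (y t) = t := by
  have hslope : ∀ᵐ u ∂(volume.restrict (Icc 0 a)), fderiv ℝ τ (y u) (f u) ≤ 1 - p := by
    filter_upwards [hsel, hH3] with u hu hτu
    linarith [hτu (y u) (f u) hu]
  have hbefore : ∀ s ∈ Ico 0 t₁, s < τ (y s) := fun s hs ↦ by
    have := hτ.sub_lt_of_ae_fderiv_le_one_sub hp hf hslope ⟨hs.1, hs.2.le.trans ht₁.2⟩ ht₁ hs.2
      (c := y₀) fun u hu ↦ hy1 u ⟨hs.1.trans hu.1.le, hu.2⟩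
    rw [← hy1 s ⟨hs.1, hs.2.le⟩, hjump] at this
    linarith
  have hafter : ∀ t ∈ Ioc t₁ a, τ (y t) < t := fun t ht ↦ by
    have := hτ.sub_lt_of_ae_fderiv_le_one_sub hp hf hslope ht₁ ⟨ht₁.1.trans ht.1.le, ht.2⟩ ht.1
      (c := y₀ + I (y t₁)) fun u hu ↦ hy2 u ⟨hu.1, hu.2.trans ht.2⟩
    rw [add_right_comm, ← hy1 t₁ ⟨ht₁.1, le_rfl⟩] at this
    linarith [hτI (y t₁)]
  refine ⟨t₁, ⟨ht₁, hjump⟩, fun t ⟨ht, hτt⟩ ↦ ?_⟩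
  rcases lt_trichotomy t t₁ with hlt | heq | hgt
  · exact absurd hτt (hbefore t ⟨ht.1, hlt⟩).ne'
  · exact heq
  · exact absurd hτt (hafter t ⟨hgt, ht.2⟩).ne

/-- Under (F0)–(F3) and (H1)₁–(H3)₁, every solution of the impulsive differential
inclusion `y' ∈ F(t,y)` off the pulse hypersurface, `y(0) = y₀`,
`y(t⁺) = y(t) + I(y(t))` at `t = τ(y(t))`, meets the hypersurface `{t = τ(x)}` exactly
once on `[0,a]`. -/
theorem stmt19 (a : ℝ) (ha : 0 < a) (N : ℕ)
    (F : ℝ → EuclideanSpace ℝ (Fin N) → Set (EuclideanSpace ℝ (Fin N)))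
    -- (F0): compact convex nonempty values
    (hF0 : ∀ t x, IsCompact (F t x) ∧ Convex ℝ (F t x) ∧ (F t x).Nonempty)
    -- (F1): measurable selections of F(·,x)
    (hF1 : ∀ x, ∃ q : ℝ → EuclideanSpace ℝ (Fin N), Measurable q ∧
      ∀ t ∈ Icc 0 a, q t ∈ F t x)
    -- (F2): almost uniform H-upper semicontinuity in the state variable
    (hF2 : ∀ x : EuclideanSpace ℝ (Fin N), ∀ ε > (0:ℝ), ∃ δ > (0:ℝ),
      ∀ᵐ t ∂(volume.restrict (Icc 0 a)), ∀ x' : EuclideanSpace ℝ (Fin N),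
        ‖x - x'‖ < δ → ∀ φ ∈ F t x', infDist φ (F t x) < ε)
    -- (F3): sublinear growth
    (α : ℝ → ℝ) (hα : IntegrableOn α (Icc 0 a)) (hα0 : ∀ t, 0 ≤ α t)
    (hF3 : ∀ᵐ t ∂(volume.restrict (Icc 0 a)), ∀ x, ∀ φ ∈ F t x,
      ‖φ‖ ≤ α t * (1 + ‖x‖))
    -- (H1)₁: continuous impulse function
    (I : EuclideanSpace ℝ (Fin N) → EuclideanSpace ℝ (Fin N)) (hI : Continuous I)
    -- (H2)₁: τ is C¹, 0 < τ < a, τ(x + I(x)) ≤ τ(x), bounded gradient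
    (τ : EuclideanSpace ℝ (Fin N) → ℝ) (hτ : ContDiff ℝ 1 τ)
    (hτa : ∀ x, τ x ∈ Ioo 0 a) (hτI : ∀ x, τ (x + I x) ≤ τ x)
    (M : ℝ) (hM : ∀ x, ‖fderiv ℝ τ x‖ ≤ M)
    -- (H3)₁: transversality
    (p : ℝ) (hp : 0 < p)
    (hH3 : ∀ᵐ t ∂(volume.restrict (Icc 0 a)), ∀ x, ∀ φ ∈ F t x,
      fderiv ℝ τ x φ - 1 ≤ -p)
    -- a solution y with jump time t₁ and integrable selection f
    (y₀ : EuclideanSpace ℝ (Fin N)) (y : ℝ → EuclideanSpace ℝ (Fin N))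
    (t₁ : ℝ) (ht₁ : t₁ ∈ Icc 0 a) (hjump : τ (y t₁) = t₁)
    (f : ℝ → EuclideanSpace ℝ (Fin N)) (hf : IntegrableOn f (Icc 0 a))
    (hsel : ∀ᵐ t ∂(volume.restrict (Icc 0 a)), f t ∈ F t (y t))
    (hy1 : ∀ t ∈ Icc 0 t₁, y t = y₀ + ∫ s in (0:ℝ)..t, f s)
    (hy2 : ∀ t ∈ Ioc t₁ a, y t = y₀ + I (y t₁) + ∫ s in (0:ℝ)..t, f s) :
    ∃! t, t ∈ Icc 0 a ∧ τ (y t) = t :=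
  stmt19_general a N F I τ hτ hτI p hp hH3 y₀ y t₁ ht₁ hjump f hf hsel hy1 hy2
end
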